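/- Let G be a finite p-group with |Z(G)| = p such that (G, Z(G)) is a Camina pair. Then |G| divides |Aut(G)|. -/

import Mathlib

/-!
Since `Inn G ≅ G ⧸ Z(G)` has order `|G| / p`, it suffices to find a non-inner automorphism of
`p`-power order. Every automorphism below has the form `g ↦ g * μ g` for a crossed homomorphism
`μ` (`μ (g * h) = h⁻¹ * μ g * h * μ h`) with `μ ∘ μ = 1`. Let `z` generate `Z(G)` and, for
`u ∈ Z₂(G)`, write `⁅u, g⁆ = z ^ a g`.

* If some `u ∈ Z₂ \ Z` has `u ^ p * z ^ (p choose 2) = 1`, take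
  `μ g = u ^ a g * z ^ (a g choose 2)`: this is the automorphism fixing `C(u)` and sending any `h`
  with `⁅u, h⁆ = z` to `h * u`.
* If `p = 2` and `u, v ∈ Z₂ \ Z` are commuting involutions with `u * v ∉ Z`, take
  `μ g = u ^ b g * v ^ a g * z ^ (a g * b g)`, where `a` and `b` are the exponents for `u` and `v`.
* Otherwise, for a fixed `u ∈ Z₂ \ Z`, every `t ∈ Z₂ \ Z` has `u ∈ ⟨t⟩ * Z`, hence
  `C(t) ≤ C(u)`. Take `μ = f : G → Z(G)` with kernel a maximal subgroup `M ⊈ C(u)`: conjugation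
  by `t` equal to `g ↦ g * f g` would force `t ∈ Z₂ \ Z` and `C(t) = M`.

In the first two cases `μ g` is never a nontrivial central element, whereas by the Camina
condition conjugation by any `t ∉ Z` moves some element by exactly `z`.
-/

/-- `(G, Z(G))` is a Camina pair: `Z(G)` is a nontrivial proper (normal) subgroup and
`x * Z(G) ⊆ xᴳ` for every `x ∈ G \ Z(G)`. -/
def IsCaminaPairCenter (G : Type*) [Group G] : Prop :=
  Subgroup.center G ≠ ⊥ ∧ Subgroup.center G ≠ ⊤ ∧
    ∀ x : G, x ∉ Subgroup.center G → ∀ z ∈ Subgroup.center G, IsConj x (x * z)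

open Subgroup
open scoped commutatorElement

theorem Nat.add_choose_two (m n : ℕ) : (m + n).choose 2 = m.choose 2 + n.choose 2 + m * n := by
  induction n with
  | zero => simp
  | succ n ih =>
    rw [← add_assoc, Nat.choose_succ_succ, ih, Nat.choose_succ_succ, Nat.choose_one_right,
      Nat.choose_one_right]
    ring

section

variable {G : Type*} [Group G]

theorem mem_upperCentralSeries_two_iff {u : G} :
    u ∈ Subgroup.upperCentralSeries G 2 ↔ ∀ g, ⁅u, g⁆ ∈ center G := by
  rw [Subgroup.mem_upperCentralSeries_succ_iff, Subgroup.upperCentralSeries_one]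

theorem inv_mul_pow_mul_of_commutatorElement_mem_center {u h : G} (hc : ⁅u, h⁆ ∈ center G)
    (n : ℕ) : h⁻¹ * u ^ n * h = ⁅u, h⁆ ^ n * u ^ n := by
  have hconj : h⁻¹ * u * h = ⁅u, h⁆ * u :=
    calc h⁻¹ * u * h = h⁻¹ * (⁅u, h⁆ * h) * u := by rw [commutatorElement_def]; group
      _ = ⁅u, h⁆ * u := by rw [← mem_center_iff.mp hc h]; group
  rw [show h⁻¹ * u ^ n * h = (h⁻¹ * u * h) ^ n by simpa using (conj_pow (a := h⁻¹)).symm, hconj,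
    Commute.mul_pow (mem_center_iff.mp hc u).symm]

theorem commutatorElement_mul_right_of_mem_center {a b c : G} (hc : ⁅a, c⁆ ∈ center G) :
    ⁅a, b * c⁆ = ⁅a, b⁆ * ⁅a, c⁆ := by
  rw [commutatorElement_mul_right_eq_mul_conj, mul_assoc _ b, mem_center_iff.mp hc b,
    mul_assoc, mul_inv_cancel_right]

theorem commutatorElement_pow_left_of_mem_center {a b : G} (hc : ⁅a, b⁆ ∈ center G) (n : ℕ) :
    ⁅a ^ n, b⁆ = ⁅a, b⁆ ^ n := by
  induction n with
  | zero => simp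
  | succ n ih =>
    rw [pow_succ', commutatorElement_mul_left_eq_conj_mul, ih, mem_center_iff.mp (pow_mem hc n) a,
      mul_inv_cancel_right, ← pow_succ]

theorem pow_mem_center_of_mem_upperCentralSeries_two {w : G}
    (hw : w ∈ Subgroup.upperCentralSeries G 2) {n : ℕ} (hn : ∀ c ∈ center G, c ^ n = 1) :
    w ^ n ∈ center G := by
  have hw' := mem_upperCentralSeries_two_iff.mp hw
  refine mem_center_iff.mpr fun g => (commutatorElement_eq_one_iff_mul_comm.mp ?_).symm
  rw [commutatorElement_pow_left_of_mem_center (hw' g), hn _ (hw' g)]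

theorem pow_mul_eq_of_commutatorElement_mem_center {x y : G} (hc : ⁅y, x⁆ ∈ center G) (n : ℕ) :
    y ^ n * x = ⁅y, x⁆ ^ n * x * y ^ n := by
  have hyx : y * x = ⁅y, x⁆ * x * y := by rw [commutatorElement_def]; group
  generalize ⁅y, x⁆ = c at hc hyx
  induction n with
  | zero => simp
  | succ n ih =>
    calc y ^ (n + 1) * x = y * c ^ n * x * y ^ n := by rw [pow_succ', mul_assoc, ih]; group
      _ = c ^ (n + 1) * x * y ^ (n + 1) := by
        rw [mem_center_iff.mp (pow_mem hc n) y, mul_assoc (c ^ n), hyx]; group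

theorem mul_pow_of_commutatorElement_mem_center {x y : G} (hc : ⁅y, x⁆ ∈ center G) (n : ℕ) :
    (x * y) ^ n = ⁅y, x⁆ ^ n.choose 2 * x ^ n * y ^ n := by
  have hpow := pow_mul_eq_of_commutatorElement_mem_center hc
  generalize ⁅y, x⁆ = c at hc hpow
  induction n with
  | zero => simp
  | succ n ih =>
    calc (x * y) ^ (n + 1) = c ^ n.choose 2 * (x ^ n * c ^ n) * x * y ^ n * y := by
          rw [pow_succ, ih, mul_assoc _ (y ^ n), ← mul_assoc (y ^ n), hpow]; group
      _ = c ^ (n + 1).choose 2 * x ^ (n + 1) * y ^ (n + 1) := by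
          rw [mem_center_iff.mp (pow_mem hc n), Nat.choose_succ_succ', Nat.choose_one_right]
          group

theorem centralizer_le_centralizer_zpow_mul {t c : G} (hc : c ∈ center G) (j : ℤ) :
    centralizer {t} ≤ centralizer {t ^ j * c} := fun g hg => by
  rw [mem_centralizer_singleton_iff] at hg ⊢
  exact ((show Commute g t from hg).zpow_right j).mul_right (mem_center_iff.mp hc g)

theorem commute_of_sq_eq_one {a b : G} (ha : a ^ 2 = 1) (hb : b ^ 2 = 1) (hab : (a * b) ^ 2 = 1) :
    Commute a b := by
  have hinv : ∀ x : G, x ^ 2 = 1 → x⁻¹ = x := fun x hx =>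
    inv_eq_of_mul_eq_one_right (by rw [← pow_two, hx])
  calc a * b = (a * b)⁻¹ := (hinv _ hab).symm
    _ = b * a := by rw [mul_inv_rev, hinv a ha, hinv b hb]

theorem pow_orderOf_eq_one_of_mem_zpowers {z c : G} (hc : c ∈ zpowers z) : c ^ orderOf z = 1 :=
  orderOf_dvd_iff_pow_eq_one.mp (orderOf_dvd_of_mem_zpowers hc)

theorem exists_zpowers_eq_of_card_eq_prime {p : ℕ} [Fact p.Prime] {H : Subgroup G}
    (hH : Nat.card H = p) : ∃ z, H = zpowers z ∧ orderOf z = p := by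
  obtain ⟨z, hz⟩ := (H.isCyclic_iff_exists_zpowers_eq_top).mp (isCyclic_of_prime_card hH)
  exact ⟨z, hz.symm, by rw [← Nat.card_zpowers, hz, hH]⟩

theorem exists_pow_eq_commutatorElement [Finite G] {z u : G} (hZ : center G = zpowers z)
    (hu : u ∈ Subgroup.upperCentralSeries G 2) : ∃ a : G → ℕ, ∀ g, z ^ a g = ⁅u, g⁆ := by
  choose a ha using fun g =>
    mem_powers_iff_mem_zpowers.mpr (hZ ▸ mem_upperCentralSeries_two_iff.mp hu g)
  exact ⟨a, ha⟩

theorem Function.Periodic.eq_of_pow_eq_pow {α : Type*} {f : ℕ → α} {z : G}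
    (hf : Function.Periodic f (orderOf z)) {m n : ℕ} (h : z ^ m = z ^ n) : f m = f n := by
  rw [← hf.map_mod_nat m, ← hf.map_mod_nat n, (pow_eq_pow_iff_modEq.mp h)]

theorem prime_dvd_of_pow_mem {p : ℕ} [Fact p.Prime] (H : Subgroup G) [H.Normal] {u : G}
    (hu : u ∉ H) (hup : u ^ p ∈ H) {n : ℕ} (hn : u ^ n ∈ H) : p ∣ n := by
  have hord : orderOf (u : G ⧸ H) = p :=
    orderOf_eq_prime (by rwa [← QuotientGroup.mk_pow, QuotientGroup.eq_one_iff])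
      (by rwa [Ne, QuotientGroup.eq_one_iff])
  exact hord ▸ orderOf_dvd_of_pow_eq_one (by rwa [← QuotientGroup.mk_pow, QuotientGroup.eq_one_iff])

theorem IsPGroup.exists_mem_upperCentralSeries_two_notMem_center [Finite G] {p : ℕ}
    [Fact p.Prime] (hG : IsPGroup p G) (htop : center G ≠ ⊤) :
    ∃ u ∈ Subgroup.upperCentralSeries G 2, u ∉ center G := by
  have := QuotientGroup.nontrivial_iff.mpr htop
  have := (hG.to_quotient (center G)).center_nontrivial
  obtain ⟨c, hc⟩ := exists_ne (1 : center (G ⧸ center G))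
  obtain ⟨u, hu⟩ := QuotientGroup.mk_surjective (c : G ⧸ center G)
  refine ⟨u, mem_upperCentralSeries_two_iff.mpr fun g => ?_, fun h => hc ?_⟩
  · rw [← QuotientGroup.eq_one_iff, ← QuotientGroup.mk'_apply, map_commutatorElement,
      QuotientGroup.mk'_apply, hu, commutatorElement_eq_one_iff_mul_comm]
    exact (mem_center_iff.mp c.2 _).symm
  · exact Subtype.ext (by rw [← hu, OneMemClass.coe_one, QuotientGroup.eq_one_iff]; exact h)

theorem MulAut.ker_conj : (MulAut.conj : G →* MulAut G).ker = center G := by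
  ext g
  simp only [MonoidHom.mem_ker, mem_center_iff, MulEquiv.ext_iff, MulAut.conj_apply,
    MulAut.one_apply]
  exact forall_congr' fun x => by rw [mul_inv_eq_iff_eq_mul, eq_comm]

instance MulAut.normal_range_conj : (MulAut.conj : G →* MulAut G).range.Normal where
  conj_mem := by
    rintro _ ⟨g, rfl⟩ ψ
    exact ⟨ψ g, MulEquiv.ext fun x => by simp [MulAut.mul_apply, MulAut.inv_apply]⟩

theorem card_dvd_card_mulAut_of_notMem_range_conj {p n : ℕ} [Fact p.Prime]
    (hZ : Nat.card (center G) = p) {α : MulAut G} (hα : α ^ p ^ n = 1)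
    (hni : α ∉ (MulAut.conj : G →* MulAut G).range) : Nat.card G ∣ Nat.card (MulAut G) := by
  set Inn := (MulAut.conj : G →* MulAut G).range
  have hcardInn : Nat.card Inn = (center G).index := by
    rw [← Subgroup.index_ker, MulAut.ker_conj]
  have hq : (α : MulAut G ⧸ Inn) ≠ 1 := by rwa [Ne, QuotientGroup.eq_one_iff]
  obtain ⟨k, -, hk⟩ := (Nat.dvd_prime_pow Fact.out).mp
    (orderOf_dvd_of_pow_eq_one (by rw [← QuotientGroup.mk_pow, hα, QuotientGroup.mk_one]) :
      orderOf (α : MulAut G ⧸ Inn) ∣ p ^ n)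
  have hk0 : k ≠ 0 := by
    rintro rfl
    exact hq (orderOf_eq_one_iff.mp (by rw [hk, pow_zero]))
  have hpInn : p ∣ Inn.index :=
    (dvd_pow_self p hk0).trans (hk ▸ orderOf_dvd_natCard (α : MulAut G ⧸ Inn))
  rw [← (center G).card_mul_index, ← Inn.card_mul_index, hZ, hcardInn, mul_comm]
  exact mul_dvd_mul_left _ hpInn

theorem exists_mulAut_pow_apply_of_crossed [Finite G] (μ : G → G)
    (hμ : ∀ g h, μ (g * h) = h⁻¹ * μ g * h * μ h) (hμμ : ∀ g, μ (μ g) = 1) :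
    ∃ α : MulAut G, ∀ (n : ℕ) (g : G), (α ^ n) g = g * μ g ^ n := by
  have hμ1 : μ 1 = 1 := by simpa using hμ 1 1
  have hμinv : ∀ x, μ x = 1 → μ x⁻¹ = 1 := fun x hx => by
    have h := hμ x⁻¹ x
    rwa [inv_mul_cancel, hμ1, hx, mul_one, eq_comm, mul_eq_one_iff_eq_inv,
      mul_eq_left] at h
  have hfix : ∀ g, μ (g * μ g) = μ g := fun g => by rw [hμ, hμμ]; group
  let F : G →* G :=
    { toFun := fun g => g * μ g
      map_one' := by simp [hμ1]
      map_mul' := fun g h => by simp only [hμ]; group }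
  have hF : Function.Injective F := by
    refine (injective_iff_map_eq_one F).mpr fun g hg => ?_
    have hg' : g = (μ g)⁻¹ := eq_inv_of_mul_eq_one_left hg
    have hμg : μ g = 1 := by rw [hg', hμinv _ (hμμ g)]
    rwa [hμg, inv_one] at hg'
  refine ⟨MulEquiv.ofBijective F ⟨hF, Finite.surjective_of_injective hF⟩, fun n => ?_⟩
  induction n with
  | zero => simp
  | succ n ih =>
    intro g
    rw [pow_succ, MulAut.mul_apply, ih]
    show g * μ g * μ (g * μ g) ^ n = _
    rw [hfix, mul_assoc, pow_succ']

theorem IsCaminaPairCenter.notMem_range_conj (hC : IsCaminaPairCenter G) {α : MulAut G}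
    (hα : α ≠ 1) (hdisp : ∀ g, g⁻¹ * α g ∈ center G → α g = g) :
    α ∉ (MulAut.conj : G →* MulAut G).range := by
  rintro ⟨t, rfl⟩
  obtain ⟨hbot, -, hconj⟩ := hC
  have ht : t ∉ center G := fun ht => hα <| by
    rw [← MonoidHom.mem_ker, MulAut.ker_conj]; exact ht
  obtain ⟨z, hz, hz1⟩ := (center G).bot_or_exists_ne_one.resolve_left hbot
  obtain ⟨c, hc⟩ := isConj_iff.mp (hconj t ht z hz)
  have hdisp_c : c⁻¹⁻¹ * MulAut.conj t c⁻¹ = z := by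
    rw [MulAut.conj_apply, inv_inv, ← mul_assoc, ← mul_assoc, hc, mem_center_iff.mp hz t,
      mul_inv_cancel_right]
  apply hz1
  rw [← hdisp_c, hdisp c⁻¹ (hdisp_c ▸ hz), inv_mul_cancel]

theorem IsCaminaPairCenter.notMem_range_conj_of_apply_eq_mul (hC : IsCaminaPairCenter G)
    {α : MulAut G} {μ : G → G} (hα : ∀ g, α g = g * μ g) {u : G} (hu : u ∉ center G)
    (hμ : ∀ g, μ g ∈ center G → μ g = 1 ∧ ⁅u, g⁆ = 1) :
    α ∉ (MulAut.conj : G →* MulAut G).range := by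
  refine hC.notMem_range_conj (fun h1 => hu ?_) fun g hg => ?_
  · refine mem_center_iff.mpr fun g => (commutatorElement_eq_one_iff_mul_comm.mp ?_).symm
    have hμg : μ g = 1 := by simpa [h1] using (hα g).symm
    exact (hμ g (hμg ▸ one_mem _)).2
  · rw [hα, inv_mul_cancel_left] at hg
    rw [hα, (hμ g hg).1, mul_one]

theorem IsPGroup.normal_of_isCoatom [Finite G] {p : ℕ} [Fact p.Prime] (hG : IsPGroup p G)
    {M : Subgroup G} (hM : IsCoatom M) : M.Normal :=
  have := hG.isNilpotent
  NormalizerCondition.normal_of_coatom M Group.normalizerCondition_of_isNilpotent hM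

theorem IsPGroup.index_eq_of_isCoatom [Finite G] {p : ℕ} [Fact p.Prime] (hG : IsPGroup p G)
    {M : Subgroup G} (hM : IsCoatom M) : M.index = p := by
  have := hG.normal_of_isCoatom hM
  obtain ⟨n, hn⟩ := hG.index M
  rw [Subgroup.index] at hn
  have hn0 : n ≠ 0 := by
    rintro rfl
    exact hM.1 (index_eq_one.mp (by rw [Subgroup.index, hn, pow_zero]))
  obtain ⟨K, hK⟩ := Sylow.exists_subgroup_card_pow_prime (G := G ⧸ M) p (n := 1)
    (by rw [pow_one, hn]; exact dvd_pow_self p hn0)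
  rw [pow_one] at hK
  have hKmap := map_comap_eq_self_of_surjective (QuotientGroup.mk'_surjective M) K
  rcases hM.le_iff.mp (QuotientGroup.le_comap_mk' M K) with htop | hself
  · rw [htop, map_top_of_surjective _ (QuotientGroup.mk'_surjective M)] at hKmap
    rw [Subgroup.index, ← hK, ← hKmap, card_top]
  · rw [hself, QuotientGroup.map_mk'_self] at hKmap
    rw [← hKmap, card_bot] at hK
    exact absurd hK.symm (Fact.out : p.Prime).one_lt.ne'

theorem exists_isCoatom_not_le [Finite G] (hG : ¬ IsCyclic G) {C : Subgroup G} (hC : C ≠ ⊤) :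
    ∃ M : Subgroup G, IsCoatom M ∧ ¬ M ≤ C := by
  obtain ⟨g, -, hg⟩ := (SetLike.lt_iff_le_and_exists.mp hC.lt_top).2
  obtain htop | ⟨M, hM, hgM⟩ := eq_top_or_exists_le_coatom (zpowers g)
  · exact absurd (isCyclic_iff_exists_zpowers_eq_top.mpr ⟨g, htop⟩) hG
  · exact ⟨M, hM, fun hMC => hg (hMC (hgM (mem_zpowers g)))⟩

theorem IsCaminaPairCenter.center_le_commutator (hC : IsCaminaPairCenter G) :
    center G ≤ commutator G := by
  obtain ⟨-, htop, hconj⟩ := hC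
  obtain ⟨x, -, hx⟩ := (SetLike.lt_iff_le_and_exists.mp htop.lt_top).2
  intro z hz
  obtain ⟨c, hc⟩ := isConj_iff.mp (hconj x hx z hz)
  have : ⁅x⁻¹, c⁆ = z := by
    rw [commutatorElement_def, inv_inv, show x⁻¹ * c * x * c⁻¹ = x⁻¹ * (c * x * c⁻¹) by group,
      hc, inv_mul_cancel_left]
  exact this ▸ commutator_mem_commutator (mem_top _) (mem_top _)

theorem exists_monoidHom_ker_eq {p : ℕ} [Fact p.Prime] {H : Type*} [Group H] (M : Subgroup G)
    [M.Normal] (hM : M.index = p) (hH : Nat.card H = p) : ∃ f : G →* H, f.ker = M :=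
  ⟨(mulEquivOfPrimeCardEq hM hH).toMonoidHom.comp (QuotientGroup.mk' M), by ext; simp⟩

theorem exists_mulAut_pow_apply_of_center_le_ker [Finite G] (f : G →* center G)
    (hf : center G ≤ f.ker) : ∃ α : MulAut G, ∀ (n : ℕ) (g : G), (α ^ n) g = g * (f g : G) ^ n :=
  exists_mulAut_pow_apply_of_crossed _
    (fun g h => by
      rw [map_mul, coe_mul, mul_assoc h⁻¹, ← mem_center_iff.mp (f g).2 h, inv_mul_cancel_left])
    (fun g => by rw [MonoidHom.mem_ker.mp (hf (f g).2), OneMemClass.coe_one])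

theorem centralizer_eq_ker_of_conj_apply {t : G} (f : G →* center G)
    (h : ∀ g, t * g * t⁻¹ = g * f g) : centralizer {t} = f.ker := by
  ext g
  rw [mem_centralizer_singleton_iff, MonoidHom.mem_ker, eq_comm, ← mul_inv_eq_iff_eq_mul, h g,
    mul_eq_left, OneMemClass.coe_eq_one]

theorem mem_upperCentralSeries_two_of_conj_apply {t : G} (f : G →* center G)
    (h : ∀ g, t * g * t⁻¹ = g * f g) : t ∈ Subgroup.upperCentralSeries G 2 := by
  refine mem_upperCentralSeries_two_iff.mpr fun g => ?_
  rw [commutatorElement_def, h, mul_assoc, ← mem_center_iff.mp (f g).2, mul_inv_cancel_left]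
  exact (f g).2

theorem IsCaminaPairCenter.exists_noninner_of_centralizer_le [Finite G] {p : ℕ} [Fact p.Prime]
    (hG : IsPGroup p G) (hZ : Nat.card (center G) = p) (hC : IsCaminaPairCenter G) {u : G}
    (hu : u ∉ center G) (hcent : ∀ t ∈ Subgroup.upperCentralSeries G 2, t ∉ center G →
      centralizer {t} ≤ centralizer {u}) :
    ∃ α : MulAut G, α ^ p = 1 ∧ α ∉ (MulAut.conj : G →* MulAut G).range := by
  have hCu : centralizer {u} ≠ ⊤ := fun h =>
    hu (mem_center_iff.mpr fun g => mem_centralizer_singleton_iff.mp (h ▸ mem_top g))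
  obtain ⟨M, hM, hMu⟩ := exists_isCoatom_not_le (fun _ => hC.2.1 center_eq_top) hCu
  have := hG.normal_of_isCoatom hM
  have hMp := hG.index_eq_of_isCoatom hM
  have := isCyclic_of_prime_card hMp
  have hZM : center G ≤ M :=
    hC.center_le_commutator.trans (Normal.quotient_commutative_iff_commutator_le.mp inferInstance)
  obtain ⟨f, hf⟩ := exists_monoidHom_ker_eq M hMp hZ
  obtain ⟨α, hα⟩ := exists_mulAut_pow_apply_of_center_le_ker f (hf ▸ hZM)
  refine ⟨α, MulEquiv.ext fun g => ?_, ?_⟩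
  · rw [hα, ← coe_pow, ← hZ, pow_card_eq_one', OneMemClass.coe_one, mul_one, MulAut.one_apply]
  rintro ⟨t, ht⟩
  have hconj : ∀ g, t * g * t⁻¹ = g * f g := fun g => by
    rw [← MulAut.conj_apply, ht, ← pow_one α, hα, pow_one]
  have hcentt : centralizer {t} = M := (centralizer_eq_ker_of_conj_apply f hconj).trans hf
  have htZ : t ∉ center G := fun htZ => hM.1 <| by
    rw [← hcentt, centralizer_eq_top_iff_subset]
    exact Set.singleton_subset_iff.mpr htZ
  exact hMu (hcentt ▸ hcent t (mem_upperCentralSeries_two_of_conj_apply f hconj) htZ)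

/-- If `h⁻¹ * u * h = z * u` with `z` central, then `(h * u) ^ n = h ^ n * twistedPow u z n`. -/
def twistedPow (u z : G) (n : ℕ) : G := u ^ n * z ^ n.choose 2

section twistedPow

variable {u z : G}

theorem twistedPow_zero : twistedPow u z 0 = 1 := by simp [twistedPow]

theorem twistedPow_add (hz : z ∈ center G) (m n : ℕ) :
    twistedPow u z (m + n) = twistedPow u z m * twistedPow u z n * z ^ (m * n) := by
  have hc : ∀ k g, g * z ^ k = z ^ k * g := fun k g => mem_center_iff.mp (pow_mem hz k) g
  simp only [twistedPow, Nat.add_choose_two, pow_add, mul_assoc]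
  rw [← mul_assoc (z ^ m.choose 2) (u ^ n), ← hc (m.choose 2) (u ^ n), mul_assoc (u ^ n)]

theorem twistedPow_periodic (hz : z ∈ center G)
    (hper : twistedPow u z (orderOf z) = 1) :
    Function.Periodic (twistedPow u z) (orderOf z) := fun n => by
  rw [twistedPow_add hz, mul_comm n, pow_mul, pow_orderOf_eq_one, one_pow, mul_one]
  exact mul_eq_left.mpr hper

theorem commute_twistedPow (hz : z ∈ center G) (n : ℕ) : Commute u (twistedPow u z n) :=
  ((Commute.refl u).pow_right n).mul_right (mem_center_iff.mp (pow_mem hz _) u)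

theorem inv_mul_twistedPow_mul (hz : z ∈ center G) {h : G} (hc : ⁅u, h⁆ ∈ center G) (n : ℕ) :
    h⁻¹ * twistedPow u z n * h = ⁅u, h⁆ ^ n * twistedPow u z n := by
  rw [twistedPow, ← mul_assoc, mul_assoc _ _ h, ← mem_center_iff.mp (pow_mem hz _) h,
    ← mul_assoc, inv_mul_pow_mul_of_commutatorElement_mem_center hc, mul_assoc]

end twistedPow

theorem exists_mulAut_pow_apply_twistedPow [Finite G] {u z : G} (hz : z ∈ center G)
    (hper : twistedPow u z (orderOf z) = 1) (a : G → ℕ) (ha : ∀ g, z ^ a g = ⁅u, g⁆) :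
    ∃ α : MulAut G, ∀ (n : ℕ) (g : G), (α ^ n) g = g * twistedPow u z (a g) ^ n := by
  have hν := twistedPow_periodic hz hper
  have hc : ∀ g, ⁅u, g⁆ ∈ center G := fun g => ha g ▸ pow_mem hz _
  apply exists_mulAut_pow_apply_of_crossed
  · intro g h
    rw [hν.eq_of_pow_eq_pow (n := a g + a h)
        (by rw [ha, pow_add, ha, ha, commutatorElement_mul_right_of_mem_center (hc h)]),
      twistedPow_add hz, inv_mul_twistedPow_mul hz (hc h), ← ha h, ← pow_mul, mul_comm (a h),
      mem_center_iff.mp (pow_mem hz _) (twistedPow u z (a g) * _), ← mul_assoc]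
  · intro g
    rw [hν.eq_of_pow_eq_pow (n := 0) (by rw [ha, pow_zero,
      commutatorElement_eq_one_iff_commute.mpr (commute_twistedPow hz _)]), twistedPow_zero]

theorem IsCaminaPairCenter.exists_noninner_of_twistedPow_eq_one [Finite G] {p : ℕ} [Fact p.Prime]
    (hC : IsCaminaPairCenter G) {z : G} (hZ : center G = zpowers z) (hzo : orderOf z = p)
    {u : G} (hu2 : u ∈ Subgroup.upperCentralSeries G 2) (hu : u ∉ center G)
    (hup : twistedPow u z p = 1) :
    ∃ α : MulAut G, α ^ p ^ 2 = 1 ∧ α ∉ (MulAut.conj : G →* MulAut G).range := by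
  have hz : z ∈ center G := hZ ▸ mem_zpowers z
  have hcp : ∀ c ∈ center G, c ^ p = 1 := fun c hc =>
    hzo ▸ pow_orderOf_eq_one_of_mem_zpowers (hZ ▸ hc)
  have hup' : u ^ p ∈ center G := by
    rw [twistedPow, mul_eq_one_iff_eq_inv] at hup
    exact hup ▸ inv_mem (pow_mem hz _)
  obtain ⟨a, ha⟩ := exists_pow_eq_commutatorElement hZ hu2
  obtain ⟨α, hα⟩ := exists_mulAut_pow_apply_twistedPow hz (hzo ▸ hup) a ha
  have hν := twistedPow_periodic hz (hzo ▸ hup)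
  have hdvd : ∀ n, twistedPow u z n ∈ center G → p ∣ n := fun n hn =>
    prime_dvd_of_pow_mem (center G) hu hup' <| by
      rwa [twistedPow, mul_mem_cancel_right (pow_mem hz _)] at hn
  have hdisp : ∀ g, twistedPow u z (a g) ∈ center G → twistedPow u z (a g) = 1 ∧ ⁅u, g⁆ = 1 := by
    intro g hg
    have hzg : z ^ a g = 1 := orderOf_dvd_iff_pow_eq_one.mp (hzo ▸ hdvd _ hg)
    refine ⟨?_, ha g ▸ hzg⟩
    rw [hν.eq_of_pow_eq_pow (n := 0) (by rw [hzg, pow_zero]), twistedPow_zero]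
  refine ⟨α, MulEquiv.ext fun g => ?_,
    hC.notMem_range_conj_of_apply_eq_mul (fun g => by simpa using hα 1 g) hu hdisp⟩
  rw [hα, MulAut.one_apply, mul_eq_left, pow_two, pow_mul]
  refine hcp _ ?_
  rw [twistedPow, Commute.mul_pow (mem_center_iff.mp (pow_mem hz _) _), ← pow_mul, mul_comm,
    pow_mul]
  exact mul_mem (pow_mem hup' _) (pow_mem (pow_mem hz _) _)

def twistedPow₂ (u v z : G) (a b : ℕ) : G := u ^ a * v ^ b * z ^ (a * b)

section twistedPow₂

variable {u v z : G}

theorem twistedPow₂_zero : twistedPow₂ u v z 0 0 = 1 := by simp [twistedPow₂]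

theorem twistedPow₂_add (hz : z ∈ center G) (huv : Commute u v) (a b a' b' : ℕ) :
    twistedPow₂ u v z (a + a') (b + b') =
      twistedPow₂ u v z a b * twistedPow₂ u v z a' b' * z ^ (a * b' + a' * b) := by
  have hc : ∀ k g, g * z ^ k = z ^ k * g := fun k g => mem_center_iff.mp (pow_mem hz k) g
  have hvu : ∀ k g, v ^ k * u ^ g = u ^ g * v ^ k := fun k g => (huv.pow_pow g k).eq.symm
  simp only [twistedPow₂, pow_add, add_mul, mul_add, mul_assoc]
  rw [← mul_assoc (z ^ (a * b)) (u ^ a'), ← hc _ (u ^ a'), mul_assoc (u ^ a'),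
    ← mul_assoc (z ^ (a * b)) (v ^ b'), ← hc _ (v ^ b'), ← mul_assoc (v ^ b) (u ^ a'), hvu,
    mul_assoc (u ^ a'), mul_assoc (v ^ b')]
  simp only [← pow_add]
  congr 5
  ring

theorem twistedPow₂_periodic_left (hz : z ∈ center G) (huv : Commute u v) (hu : u ^ 2 = 1)
    (hz2 : z ^ 2 = 1) (b : ℕ) : Function.Periodic (fun a => twistedPow₂ u v z a b) 2 := fun a => by
  simp only
  rw [← add_zero b, twistedPow₂_add hz huv]
  simp [twistedPow₂, hu, pow_mul, hz2]

theorem twistedPow₂_periodic_right (hz : z ∈ center G) (huv : Commute u v) (hv : v ^ 2 = 1)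
    (hz2 : z ^ 2 = 1) (a : ℕ) : Function.Periodic (twistedPow₂ u v z a) 2 := fun b => by
  rw [← add_zero a, twistedPow₂_add hz huv]
  simp [twistedPow₂, hv, mul_comm a 2, pow_mul, hz2]

theorem commute_twistedPow₂_left (hz : z ∈ center G) (huv : Commute u v) (a b : ℕ) :
    Commute u (twistedPow₂ u v z a b) :=
  (((Commute.refl u).pow_right a).mul_right (huv.pow_right b)).mul_right
    (mem_center_iff.mp (pow_mem hz _) u)

theorem commute_twistedPow₂_right (hz : z ∈ center G) (huv : Commute u v) (a b : ℕ) :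
    Commute v (twistedPow₂ u v z a b) :=
  ((huv.symm.pow_right a).mul_right ((Commute.refl v).pow_right b)).mul_right
    (mem_center_iff.mp (pow_mem hz _) v)

theorem inv_mul_twistedPow₂_mul (hz : z ∈ center G) {h : G} (hu : ⁅u, h⁆ ∈ center G)
    (hv : ⁅v, h⁆ ∈ center G) (a b : ℕ) :
    h⁻¹ * twistedPow₂ u v z a b * h = ⁅u, h⁆ ^ a * ⁅v, h⁆ ^ b * twistedPow₂ u v z a b := by
  have hsplit : ∀ x y : G, h⁻¹ * (x * y) * h = (h⁻¹ * x * h) * (h⁻¹ * y * h) := fun x y => by group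
  rw [twistedPow₂, hsplit, hsplit, inv_mul_pow_mul_of_commutatorElement_mem_center hu,
    inv_mul_pow_mul_of_commutatorElement_mem_center hv, mul_assoc h⁻¹,
    ← mem_center_iff.mp (pow_mem hz _) h, inv_mul_cancel_left, mul_assoc (⁅u, h⁆ ^ a),
    ← mul_assoc (u ^ a), mem_center_iff.mp (pow_mem hv b) (u ^ a)]
  simp only [mul_assoc]

end twistedPow₂

theorem exists_mulAut_pow_apply_twistedPow₂ [Finite G] {u v z : G} (hz : z ∈ center G)
    (hzo : orderOf z = 2) (hu : u ^ 2 = 1) (hv : v ^ 2 = 1) (huv : Commute u v) (a b : G → ℕ)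
    (ha : ∀ g, z ^ a g = ⁅u, g⁆) (hb : ∀ g, z ^ b g = ⁅v, g⁆) :
    ∃ α : MulAut G, ∀ (n : ℕ) (g : G), (α ^ n) g = g * twistedPow₂ u v z (b g) (a g) ^ n := by
  have hz2 : z ^ 2 = 1 := hzo ▸ pow_orderOf_eq_one z
  have hca : ∀ g, ⁅u, g⁆ ∈ center G := fun g => ha g ▸ pow_mem hz _
  have hcb : ∀ g, ⁅v, g⁆ ∈ center G := fun g => hb g ▸ pow_mem hz _
  have hl : ∀ n, Function.Periodic (fun m => twistedPow₂ u v z m n) (orderOf z) :=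
    hzo ▸ twistedPow₂_periodic_left hz huv hu hz2
  have hr : ∀ m, Function.Periodic (twistedPow₂ u v z m) (orderOf z) :=
    hzo ▸ twistedPow₂_periodic_right hz huv hv hz2
  have hmod : ∀ {x y m n : ℕ}, z ^ m = z ^ x → z ^ n = z ^ y →
      twistedPow₂ u v z m n = twistedPow₂ u v z x y := fun hm hn => by
    rw [(hl _).eq_of_pow_eq_pow hm, (hr _).eq_of_pow_eq_pow hn]
  apply exists_mulAut_pow_apply_of_crossed
  · intro g h
    rw [hmod (x := b g + b h) (y := a g + a h)
        (by rw [hb, pow_add, hb, hb, commutatorElement_mul_right_of_mem_center (hcb h)])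
        (by rw [ha, pow_add, ha, ha, commutatorElement_mul_right_of_mem_center (hca h)]),
      twistedPow₂_add hz huv, inv_mul_twistedPow₂_mul hz (hca h) (hcb h), ← ha h, ← hb h,
      ← pow_mul, ← pow_mul, ← pow_add, mem_center_iff.mp (pow_mem hz _) (twistedPow₂ u v z _ _ * _),
      ← mul_assoc, mul_comm (a h), mul_comm (b h), add_comm]
  · intro g
    rw [hmod (x := 0) (y := 0)
        (by rw [hb, pow_zero, commutatorElement_eq_one_iff_commute.mpr
          (commute_twistedPow₂_right hz huv _ _)])
        (by rw [ha, pow_zero, commutatorElement_eq_one_iff_commute.mpr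
          (commute_twistedPow₂_left hz huv _ _)]), twistedPow₂_zero]

theorem mod_two_eq_zero_of_twistedPow₂_mem_center {u v z : G} (hz : z ∈ center G)
    (hu : u ^ 2 = 1) (hv : v ^ 2 = 1) (hz2 : z ^ 2 = 1) (huv : Commute u v)
    (hu' : u ∉ center G) (hv' : v ∉ center G) (huv' : u * v ∉ center G) {x y : ℕ}
    (h : twistedPow₂ u v z x y ∈ center G) : x % 2 = 0 ∧ y % 2 = 0 := by
  rw [← (twistedPow₂_periodic_left hz huv hu hz2 y).map_mod_nat,
    ← (twistedPow₂_periodic_right hz huv hv hz2 _).map_mod_nat] at h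
  rcases Nat.mod_two_eq_zero_or_one x with hx | hx <;>
    rcases Nat.mod_two_eq_zero_or_one y with hy | hy <;> simp [hx, hy, twistedPow₂] at h ⊢
  · exact hv' h
  · exact hu' h
  · exact huv' ((mul_mem_cancel_right hz).mp h)

theorem IsCaminaPairCenter.exists_noninner_of_commute [Finite G] (hC : IsCaminaPairCenter G)
    {z : G} (hZ : center G = zpowers z) (hzo : orderOf z = 2) {u v : G}
    (hu2 : u ∈ Subgroup.upperCentralSeries G 2) (hv2 : v ∈ Subgroup.upperCentralSeries G 2)
    (hu : u ∉ center G) (hv : v ∉ center G) (huv : u * v ∉ center G) (hu1 : u ^ 2 = 1)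
    (hv1 : v ^ 2 = 1) (hcomm : Commute u v) :
    ∃ α : MulAut G, α ^ 2 = 1 ∧ α ∉ (MulAut.conj : G →* MulAut G).range := by
  have hz : z ∈ center G := hZ ▸ mem_zpowers z
  have hz2 : z ^ 2 = 1 := hzo ▸ pow_orderOf_eq_one z
  obtain ⟨a, ha⟩ := exists_pow_eq_commutatorElement hZ hu2
  obtain ⟨b, hb⟩ := exists_pow_eq_commutatorElement hZ hv2
  obtain ⟨α, hα⟩ := exists_mulAut_pow_apply_twistedPow₂ hz hzo hu1 hv1 hcomm a b ha hb
  refine ⟨α, MulEquiv.ext fun g => ?_, hC.notMem_range_conj_of_apply_eq_mul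
    (μ := fun g => twistedPow₂ u v z (b g) (a g)) (fun g => by simpa using hα 1 g) hu
    fun g hg => ?_⟩
  · rw [hα, MulAut.one_apply, mul_eq_left, twistedPow₂,
      Commute.mul_pow (mem_center_iff.mp (pow_mem hz _) _), (hcomm.pow_pow _ _).mul_pow]
    rw [pow_right_comm u, hu1, pow_right_comm v, hv1, pow_right_comm z, hz2]
    simp only [one_pow, mul_one]
  · obtain ⟨hx, hy⟩ := mod_two_eq_zero_of_twistedPow₂_mem_center hz hu1 hv1 hz2 hcomm hu hv huv hg
    refine ⟨?_, ?_⟩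
    · rw [← (twistedPow₂_periodic_left hz hcomm hu1 hz2 _).map_mod_nat,
        ← (twistedPow₂_periodic_right hz hcomm hv1 hz2 _).map_mod_nat, hx, hy, twistedPow₂_zero]
    · rw [← ha, ← pow_mod_orderOf, hzo, hy, pow_zero]

theorem centralizer_le_of_twistedPow_ne_one [Finite G] {p : ℕ} [Fact p.Prime] (hp2 : p ≠ 2)
    {z : G} (hZ : center G = zpowers z) (hzo : orderOf z = p)
    (h : ∀ w ∈ Subgroup.upperCentralSeries G 2, w ∉ center G → twistedPow w z p ≠ 1) {t u : G}
    (ht2 : t ∈ Subgroup.upperCentralSeries G 2) (ht : t ∉ center G)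
    (hu2 : u ∈ Subgroup.upperCentralSeries G 2) : centralizer {t} ≤ centralizer {u} := by
  have hp : p.Prime := Fact.out
  have hcp : ∀ c ∈ center G, c ^ p = 1 := fun c hc =>
    hzo ▸ pow_orderOf_eq_one_of_mem_zpowers (hZ ▸ hc)
  have hchoose : ∀ c ∈ center G, c ^ p.choose 2 = 1 := fun c hc => by
    obtain ⟨m, hm⟩ := hp.dvd_choose_self two_ne_zero (lt_of_le_of_ne hp.two_le (Ne.symm hp2))
    rw [hm, pow_mul, hcp c hc, one_pow]
  have htw : ∀ w, twistedPow w z p = w ^ p := fun w => by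
    rw [twistedPow, hchoose z (hZ ▸ mem_zpowers z), mul_one]
  have htp : t ^ p ∈ center G := pow_mem_center_of_mem_upperCentralSeries_two ht2 hcp
  have hgen : center G ≤ zpowers (t ^ p) := by
    obtain ⟨k, hk : z ^ k = t ^ p⟩ := mem_powers_iff_mem_zpowers.mpr (hZ ▸ htp)
    have hk' : ¬ p ∣ k := fun hdvd => h t ht2 ht <| by
      rw [htw, ← hk]
      exact orderOf_dvd_iff_pow_eq_one.mp (hzo ▸ hdvd)
    rw [hZ, ← hk, zpowers_le, mem_zpowers_pow_iff, hzo]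
    exact (Nat.coprime_comm.mp ((Nat.Prime.coprime_iff_not_dvd hp).mpr hk'))
  obtain ⟨j, hj⟩ := mem_zpowers_iff.mp (hgen (pow_mem_center_of_mem_upperCentralSeries_two hu2 hcp))
  set c := (t ^ j)⁻¹ * u with hc_def
  have hc2 : c ∈ Subgroup.upperCentralSeries G 2 := mul_mem (inv_mem (zpow_mem ht2 j)) hu2
  have hcp1 : c ^ p = 1 := by
    rw [mul_pow_of_commutatorElement_mem_center (mem_upperCentralSeries_two_iff.mp hu2 _),
      hchoose _ (mem_upperCentralSeries_two_iff.mp hu2 _), one_mul, inv_pow, ← zpow_natCast,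
      ← zpow_mul, mul_comm, zpow_mul, zpow_natCast, hj, inv_mul_cancel]
  have hc : c ∈ center G := by
    by_contra hc
    exact h c hc2 hc (by rw [htw, hcp1])
  have hu : u = t ^ j * c := by rw [hc_def, mul_inv_cancel_left]
  exact hu ▸ centralizer_le_centralizer_zpow_mul hc j

theorem sq_eq_one_of_twistedPow_ne_one [Finite G] {z : G} (hZ : center G = zpowers z)
    (hzo : orderOf z = 2) {w : G} (hw2 : w ∈ Subgroup.upperCentralSeries G 2)
    (hw : twistedPow w z 2 ≠ 1) : w ^ 2 = 1 := by
  obtain ⟨k, hk : z ^ k = w ^ 2⟩ := mem_powers_iff_mem_zpowers.mpr (hZ ▸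
    pow_mem_center_of_mem_upperCentralSeries_two hw2 fun c hc =>
      hzo ▸ pow_orderOf_eq_one_of_mem_zpowers (hZ ▸ hc))
  rw [← hk, ← pow_mod_orderOf, hzo]
  rcases Nat.mod_two_eq_zero_or_one k with h0 | h1
  · rw [h0, pow_zero]
  · refine absurd ?_ hw
    rw [twistedPow, ← hk, ← pow_mod_orderOf, hzo, h1, Nat.choose_self, pow_one, ← pow_two, ← hzo,
      pow_orderOf_eq_one]

theorem IsCaminaPairCenter.exists_noninner_of_two [Finite G] (hG : IsPGroup 2 G)
    (hC : IsCaminaPairCenter G) {z : G}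
    (hZ : center G = zpowers z) (hzo : orderOf z = 2)
    (h : ∀ w ∈ Subgroup.upperCentralSeries G 2, w ∉ center G → twistedPow w z 2 ≠ 1) {u : G}
    (hu2 : u ∈ Subgroup.upperCentralSeries G 2) (hu : u ∉ center G) :
    ∃ α : MulAut G, α ^ 2 = 1 ∧ α ∉ (MulAut.conj : G →* MulAut G).range := by
  have hsq : ∀ w ∈ Subgroup.upperCentralSeries G 2, w ∉ center G → w ^ 2 = 1 :=
    fun w hw2 hw => sq_eq_one_of_twistedPow_ne_one hZ hzo hw2 (h w hw2 hw)
  by_cases hB : ∃ t ∈ Subgroup.upperCentralSeries G 2, t ∉ center G ∧ u * t ∉ center G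
  · obtain ⟨t, ht2, ht, hut⟩ := hB
    exact hC.exists_noninner_of_commute hZ hzo hu2 ht2 hu ht hut (hsq u hu2 hu) (hsq t ht2 ht)
      (commute_of_sq_eq_one (hsq u hu2 hu) (hsq t ht2 ht) (hsq _ (mul_mem hu2 ht2) hut))
  · push Not at hB
    refine hC.exists_noninner_of_centralizer_le hG (by rw [hZ, Nat.card_zpowers, hzo]) hu
      fun t ht2 ht => ?_
    have hu' : u = t ^ (-1 : ℤ) * (u * t) := by
      rw [zpow_neg_one, mem_center_iff.mp (hB t ht2 ht) t⁻¹, mul_inv_cancel_right]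
    exact hu' ▸ centralizer_le_centralizer_zpow_mul (hB t ht2 ht) (-1)

end

/-- If `G` is a finite `p`-group with `|Z(G)| = p` such that `(G, Z(G))` is a Camina
pair, then `|G|` divides `|Aut G|`. -/
theorem card_dvd_card_mulAut_of_center_prime {p : ℕ} [Fact p.Prime] {G : Type*} [Group G]
    [Finite G] (hp : IsPGroup p G) (hZ : Nat.card (Subgroup.center G) = p)
    (hC : IsCaminaPairCenter G) :
    Nat.card G ∣ Nat.card (MulAut G) := by
  obtain ⟨z, hZz, hzo⟩ := exists_zpowers_eq_of_card_eq_prime hZ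
  obtain ⟨u, hu2, hu⟩ := hp.exists_mem_upperCentralSeries_two_notMem_center hC.2.1
  by_cases h : ∃ w ∈ Subgroup.upperCentralSeries G 2, w ∉ center G ∧ twistedPow w z p = 1
  · obtain ⟨w, hw2, hw, hwp⟩ := h
    obtain ⟨α, hα, hni⟩ := hC.exists_noninner_of_twistedPow_eq_one hZz hzo hw2 hw hwp
    exact card_dvd_card_mulAut_of_notMem_range_conj hZ hα hni
  push Not at h
  obtain ⟨α, hα, hni⟩ : ∃ α : MulAut G, α ^ p = 1 ∧ α ∉ (MulAut.conj : G →* MulAut G).range := by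
    rcases eq_or_ne p 2 with rfl | hp2
    · exact hC.exists_noninner_of_two hp hZz hzo h hu2 hu
    · exact hC.exists_noninner_of_centralizer_le hp hZ hu fun t ht2 ht =>
        centralizer_le_of_twistedPow_ne_one hp2 hZz hzo h ht2 ht hu2
  exact card_dvd_card_mulAut_of_notMem_range_conj hZ (n := 1) (by rwa [pow_one]) hni
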